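/- Fix N ≥ 2, privacy sensitivities α_1,…,α_N ∈ (0,1), and constants κ, L_F, c, S > 0. Suppose σ** ∈ (0,∞)^N satisfies the social-optimum first-order conditions: for every i, κ·(Σ_{j=1}^N (1−α_j))·T^{-3/2}·(T^{-1/2} + L_F)/L_F = α_i·c·S·σ_i**, where T = Σ_{j=1}^N (σ_j**)^{-2}. Define for each i the penalty coefficient β_i = N²·κ·(Σ_{j≠i}(1−α_j))·T^{-3/2}·(T^{-1/2} + L_F) / (2·(N−1)²·L_F·(σ_i**)⁴). Then for every i, the priced cost J̄_i(σ) = (1−α_i)·κ·Δ_i(σ)·(1 + Δ_i(σ)/(2 L_F)) + α_i·c·S/σ + β_i·(((N−1)/N)²·σ² + (1/N²)·Σ_{j≠i}(σ_j**)²), where Δ_i(σ) = (σ^{-2} + Σ_{j≠i}(σ_j**)^{-2})^{-1/2}, has derivative zero at σ = σ_i**. Hence under this pricing scheme the socially optimal noise profile satisfies every client's first-order equilibrium condition, so the mechanism attains the social optimum (price-of-anarchy ratio γ = 1). -/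

import Mathlib

/-!
Write `T = σ_i⁻² + R` with `R = ∑_{j≠i} σ_j⁻²`. Since `d/dσ (σ⁻² + R)^(-1/2) = T^(-3/2)/σ³`, client `i`'s
marginal training loss is `(1-α_i)·κ·T^(-3/2)·(T^(-1/2)+L_F)/(L_F·σ³)`, while `β_i` is chosen so that the
marginal price `β_i·((N-1)/N)²·2σ` equals the same expression with `1-α_i` replaced by `∑_{j≠i}(1-α_j)`.
The two add up to the social marginal loss, which the social first-order condition equates to `α_i·c·S/σ²`,
the client's marginal privacy gain.
-/

open Finset

theorem hasDerivAt_rpow_neg_half_inv_sq_add {σ R : ℝ} (hσ : σ ≠ 0) (hR : 0 ≤ R) :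
    HasDerivAt (fun x : ℝ => ((x ^ 2)⁻¹ + R) ^ (-(1 / 2) : ℝ))
      (((σ ^ 2)⁻¹ + R) ^ (-(3 / 2) : ℝ) / σ ^ 3) σ := by
  have hT : ((σ ^ 2)⁻¹ + R) ≠ 0 := by positivity
  have hinner : HasDerivAt (fun x : ℝ => (x ^ 2)⁻¹ + R) (-(2 * σ) / (σ ^ 2) ^ 2) σ := by
    simpa using ((hasDerivAt_pow 2 σ).inv (by positivity)).add_const R
  convert hinner.rpow_const (p := -(1 / 2)) (Or.inl hT) using 1
  rw [show (-(1 / 2) : ℝ) - 1 = -(3 / 2) by norm_num]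
  field_simp

theorem HasDerivAt.const_mul_mul_one_add_div {f : ℝ → ℝ} {f' x : ℝ} (hf : HasDerivAt f f' x)
    (k L : ℝ) :
    HasDerivAt (fun y => k * f y * (1 + f y / (2 * L))) (k * f' * (1 + f x / L)) x := by
  refine ((hf.const_mul k).mul ((hf.div_const (2 * L)).const_add 1)).congr_deriv ?_
  ring

theorem hasDerivAt_pricedCost {σ R : ℝ} (hσ : σ ≠ 0) (hR : 0 ≤ R) (k L a b p q : ℝ) :
    HasDerivAt (fun x : ℝ =>
        k * ((x ^ 2)⁻¹ + R) ^ (-(1 / 2) : ℝ) * (1 + ((x ^ 2)⁻¹ + R) ^ (-(1 / 2) : ℝ) / (2 * L)) +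
          a / x + b * (p * x ^ 2 + q))
      (k * (((σ ^ 2)⁻¹ + R) ^ (-(3 / 2) : ℝ) / σ ^ 3) *
          (1 + ((σ ^ 2)⁻¹ + R) ^ (-(1 / 2) : ℝ) / L) - a / σ ^ 2 + b * (p * (2 * σ))) σ := by
  have hloss := (hasDerivAt_rpow_neg_half_inv_sq_add hσ hR).const_mul_mul_one_add_div k L
  have hpriv : HasDerivAt (fun x : ℝ => a / x) (-a / σ ^ 2) σ := by
    simpa [div_eq_mul_inv] using (hasDerivAt_inv hσ).const_mul a
  have hprice : HasDerivAt (fun x : ℝ => b * (p * x ^ 2 + q)) (b * (p * (2 * σ))) σ := by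
    simpa using (((hasDerivAt_pow 2 σ).const_mul p).add_const q).const_mul b
  refine ((hloss.add hpriv).add hprice).congr_deriv ?_
  ring

theorem price_marginal_eq {N : ℕ} (hN : 2 ≤ N) {κ A P Q L σ : ℝ} (hL : L ≠ 0) (hσ : σ ≠ 0) :
    (N : ℝ) ^ 2 * κ * A * P * (Q + L) / (2 * ((N : ℝ) - 1) ^ 2 * L * σ ^ 4) *
        ((((N : ℝ) - 1) / N) ^ 2 * (2 * σ)) = κ * A * P * (Q + L) / (L * σ ^ 3) := by
  have hN1 : (N : ℝ) - 1 ≠ 0 := by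
    have : (2 : ℝ) ≤ N := by exact_mod_cast hN
    linarith
  have hN0 : (N : ℝ) ≠ 0 := by positivity
  field_simp

theorem stmt_14_general (N : ℕ) (hN : 2 ≤ N) (α : Fin N → ℝ)
    (κ L_F c S : ℝ) (hL : 0 < L_F)
    (σs : Fin N → ℝ) (hpos : ∀ i, 0 < σs i)
    (T : ℝ) (hT : T = ∑ j, ((σs j) ^ 2)⁻¹)
    (hfoc : ∀ i, κ * (∑ j, (1 - α j)) * T ^ (-(3 / 2) : ℝ) *
      (T ^ (-(1 / 2) : ℝ) + L_F) / L_F = α i * c * S * σs i)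
    (β : Fin N → ℝ)
    (hβ : ∀ i, β i = (N : ℝ) ^ 2 * κ * (∑ j ∈ Finset.univ.erase i, (1 - α j)) *
      T ^ (-(3 / 2) : ℝ) * (T ^ (-(1 / 2) : ℝ) + L_F) /
      (2 * ((N : ℝ) - 1) ^ 2 * L_F * (σs i) ^ 4)) :
    ∀ i, deriv (fun σ : ℝ =>
      (1 - α i) * κ * (((σ ^ 2)⁻¹ + ∑ j ∈ Finset.univ.erase i, ((σs j) ^ 2)⁻¹) ^ (-(1 / 2) : ℝ)) *
        (1 + (((σ ^ 2)⁻¹ + ∑ j ∈ Finset.univ.erase i, ((σs j) ^ 2)⁻¹) ^ (-(1 / 2) : ℝ)) /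
          (2 * L_F)) +
      α i * c * S / σ +
      β i * ((((N : ℝ) - 1) / N) ^ 2 * σ ^ 2 +
        (1 / (N : ℝ) ^ 2) * ∑ j ∈ Finset.univ.erase i, (σs j) ^ 2)) (σs i) = 0 := by
  intro i
  have hσ : σs i ≠ 0 := (hpos i).ne'
  have hR : 0 ≤ ∑ j ∈ univ.erase i, ((σs j) ^ 2)⁻¹ := sum_nonneg fun j _ => by positivity
  have hTi : T = ((σs i) ^ 2)⁻¹ + ∑ j ∈ univ.erase i, ((σs j) ^ 2)⁻¹ := by
    rw [hT, ← add_sum_erase _ _ (mem_univ i)]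
  have hsocial := hfoc i
  rw [← add_sum_erase _ _ (mem_univ i), div_eq_iff hL.ne'] at hsocial
  rw [(hasDerivAt_pricedCost hσ hR _ _ _ _ _ _).deriv, ← hTi, hβ i,
    price_marginal_eq hN hL.ne' hσ]
  field_simp
  linear_combination hsocial

/-- Pricing mechanism under complete information: if `σs` satisfies the social-optimum
first-order conditions, and the penalty coefficients `β i` are chosen as
`β_i = N²·κ·(∑_{j≠i}(1−α_j))·T^{-3/2}·(T^{-1/2}+L_F) / (2(N−1)²·L_F·σs_i⁴)` with
`T = ∑ j σs_j^{-2}`, then every client's priced expected cost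
`J̄_i(σ) = (1−α_i)·κ·Δ_i(σ)·(1+Δ_i(σ)/(2L_F)) + α_i·c·S/σ
  + β_i·(((N−1)/N)²·σ² + (1/N²)·∑_{j≠i} σs_j²)`,
with `Δ_i(σ) = (σ^{-2} + ∑_{j≠i} σs_j^{-2})^{-1/2}`, has derivative zero at `σ = σs_i`:
the socially optimal profile satisfies every client's first-order equilibrium condition. -/
theorem stmt_14 (N : ℕ) (hN : 2 ≤ N) (α : Fin N → ℝ) (hα : ∀ i, 0 < α i ∧ α i < 1)
    (κ L_F c S : ℝ) (hκ : 0 < κ) (hL : 0 < L_F) (hc : 0 < c) (hS : 0 < S)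
    (σs : Fin N → ℝ) (hpos : ∀ i, 0 < σs i)
    (T : ℝ) (hT : T = ∑ j, ((σs j) ^ 2)⁻¹)
    (hfoc : ∀ i, κ * (∑ j, (1 - α j)) * T ^ (-(3 / 2) : ℝ) *
      (T ^ (-(1 / 2) : ℝ) + L_F) / L_F = α i * c * S * σs i)
    (β : Fin N → ℝ)
    (hβ : ∀ i, β i = (N : ℝ) ^ 2 * κ * (∑ j ∈ Finset.univ.erase i, (1 - α j)) *
      T ^ (-(3 / 2) : ℝ) * (T ^ (-(1 / 2) : ℝ) + L_F) /
      (2 * ((N : ℝ) - 1) ^ 2 * L_F * (σs i) ^ 4)) :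
    ∀ i, deriv (fun σ : ℝ =>
      (1 - α i) * κ * (((σ ^ 2)⁻¹ + ∑ j ∈ Finset.univ.erase i, ((σs j) ^ 2)⁻¹) ^ (-(1 / 2) : ℝ)) *
        (1 + (((σ ^ 2)⁻¹ + ∑ j ∈ Finset.univ.erase i, ((σs j) ^ 2)⁻¹) ^ (-(1 / 2) : ℝ)) /
          (2 * L_F)) +
      α i * c * S / σ +
      β i * ((((N : ℝ) - 1) / N) ^ 2 * σ ^ 2 +
        (1 / (N : ℝ) ^ 2) * ∑ j ∈ Finset.univ.erase i, (σs j) ^ 2)) (σs i) = 0 :=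
  stmt_14_general N hN α κ L_F c S hL σs hpos T hT hfoc β hβ
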